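/- arXiv:1501.03077 — 2 statements merged into one kernel-verified Lean document; each statement's English description precedes it below -/
import Mathlib

section
/- Let Λ be an m×m real positive definite matrix with lower triangular Cholesky factor L (so Λ = L Lᵀ with L lower triangular and positive diagonal entries). If e is a zero-mean random vector with covariance Λ, then for indices j < i, the variance of the error of the best linear estimate of e_i given (e_1,...,e_j) equals ∑_{k=j+1}^{i} L_{ik}². (Deterministic form: the Schur complement variance λ_{i|j} := Λ_{ii} − Λ_{i,1:j} (Λ_{1:j,1:j})^{-1} Λ_{1:j,i} equals ∑_{k=j+1}^{i} L_{ik}².) -/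
/-!
Because `L` is lower triangular, the leading `j × j` block of `Λ = L Lᵀ` is `L₁ L₁ᵀ`, where `L₁` is
the leading block of `L`, and the cross-covariances `Λ_{1:j,i}` form the vector `L₁ w` with
`w = L_{i,1:j}`. The quadratic form `(L₁ w)ᵀ (L₁ L₁ᵀ)⁻¹ (L₁ w)` therefore collapses to `|w|²`, and
`λ_{i|j} = ∑_k L_{ik}² - ∑_{k<j} L_{ik}²`, in which only the terms `j ≤ k ≤ i` survive.
-/

open Matrix Finset

theorem Fin.sum_castLE_eq_sum_filter {M : Type*} [AddCommMonoid M] {j m : ℕ} (h : j ≤ m)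
    (f : Fin m → M) :
    ∑ a : Fin j, f (Fin.castLE h a) = ∑ k ∈ univ.filter (fun k : Fin m => (k : ℕ) < j), f k := by
  refine (sum_map univ (Fin.castLEEmb h) f).symm.trans (sum_congr ?_ fun _ _ => rfl)
  ext k
  simp only [mem_map, mem_univ, true_and, mem_filter, Fin.castLEEmb_apply]
  exact ⟨fun ⟨a, ha⟩ => ha ▸ a.isLt, fun hk => ⟨⟨k, hk⟩, rfl⟩⟩

namespace Matrix

theorem mulVec_dotProduct_inv_mul_transpose_mulVec {R n : Type*} [CommRing R] [Fintype n]
    [DecidableEq n] (A : Matrix n n R) (hA : IsUnit A.det) (w : n → R) :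
    (A *ᵥ w) ⬝ᵥ ((A * Aᵀ)⁻¹ *ᵥ (A *ᵥ w)) = w ⬝ᵥ w := by
  have hAT : IsUnit Aᵀ.det := by rwa [det_transpose]
  rw [mul_inv_rev, mulVec_mulVec, Matrix.mul_assoc, nonsing_inv_mul A hA, Matrix.mul_one,
    ← vecMul_transpose, ← dotProduct_mulVec, mulVec_mulVec, mul_nonsing_inv _ hAT, one_mulVec]

variable {R : Type*} {m j : ℕ} {L : Matrix (Fin m) (Fin m) R}

theorem IsLowerTriangular.submatrix_castLE [Zero R] (hL : L.IsLowerTriangular) (h : j ≤ m) :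
    (L.submatrix (Fin.castLE h) (Fin.castLE h)).IsLowerTriangular :=
  fun _ _ hab => hL hab

theorem IsLowerTriangular.isUnit_det_submatrix_castLE [Field R] (hL : L.IsLowerTriangular)
    (hdiag : ∀ k, L k k ≠ 0) (h : j ≤ m) :
    IsUnit (L.submatrix (Fin.castLE h) (Fin.castLE h)).det := by
  rw [det_of_isLowerTriangular _ (hL.submatrix_castLE h)]
  exact (prod_ne_zero_iff.mpr fun a _ => hdiag _).isUnit

theorem IsLowerTriangular.mul_transpose_apply_of_lt [CommSemiring R] (hL : L.IsLowerTriangular)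
    (h : j ≤ m) {p : Fin m} (hp : (p : ℕ) < j) (q : Fin m) :
    (L * Lᵀ) p q = ∑ a : Fin j, L p (Fin.castLE h a) * L q (Fin.castLE h a) := by
  rw [mul_apply, Fin.sum_castLE_eq_sum_filter h (fun k => L p k * L q k), sum_filter_of_ne]
  · rfl
  · intro k _ hk
    by_contra hkj
    exact hk (mul_eq_zero_of_left (hL (show p < k by omega)) _)

theorem IsLowerTriangular.submatrix_castLE_mul_transpose [CommSemiring R]
    (hL : L.IsLowerTriangular) (h : j ≤ m) :
    (L * Lᵀ).submatrix (Fin.castLE h) (Fin.castLE h) =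
      L.submatrix (Fin.castLE h) (Fin.castLE h) * (L.submatrix (Fin.castLE h) (Fin.castLE h))ᵀ := by
  ext a b
  exact hL.mul_transpose_apply_of_lt h a.isLt _

theorem IsLowerTriangular.mul_transpose_castLE_apply [CommSemiring R]
    (hL : L.IsLowerTriangular) (h : j ≤ m) (q : Fin m) :
    (fun a : Fin j => (L * Lᵀ) (Fin.castLE h a) q) =
      L.submatrix (Fin.castLE h) (Fin.castLE h) *ᵥ fun a => L q (Fin.castLE h a) := by
  funext a
  exact hL.mul_transpose_apply_of_lt h a.isLt q

theorem IsLowerTriangular.mul_transpose_apply_castLE [CommSemiring R]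
    (hL : L.IsLowerTriangular) (h : j ≤ m) (q : Fin m) :
    (fun a : Fin j => (L * Lᵀ) q (Fin.castLE h a)) =
      L.submatrix (Fin.castLE h) (Fin.castLE h) *ᵥ fun a => L q (Fin.castLE h a) := by
  rw [← hL.mul_transpose_castLE_apply h q]
  funext a
  exact (isSymm_mul_transpose_self L).apply _ _

theorem IsLowerTriangular.mul_transpose_apply_self_sub_sum_sq [CommRing R]
    (hL : L.IsLowerTriangular) (h : j ≤ m) (i : Fin m) :
    (L * Lᵀ) i i - ∑ a : Fin j, L i (Fin.castLE h a) ^ 2 =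
      ∑ k ∈ univ.filter (fun k : Fin m => j ≤ (k : ℕ) ∧ (k : ℕ) ≤ (i : ℕ)), L i k ^ 2 := by
  rw [Fin.sum_castLE_eq_sum_filter h (fun k => L i k ^ 2), sub_eq_iff_eq_add, mul_apply]
  simp only [transpose_apply, ← sq]
  rw [← sum_filter_add_sum_filter_not univ (fun k : Fin m => (k : ℕ) < j), add_comm,
    ← filter_filter, sum_filter_of_ne (p := fun k : Fin m => (k : ℕ) ≤ i)]
  · simp only [not_lt]
  · intro k _ hk
    by_contra hki
    exact hk (by rw [hL (show i < k by omega), sq, zero_mul])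

end Matrix

theorem stmt_0_general (m : ℕ) (Λ L : Matrix (Fin m) (Fin m) ℝ)
    (hLtri : ∀ i j : Fin m, i < j → L i j = 0)
    (hLdiag : ∀ i : Fin m, 0 < L i i)
    (hfac : Λ = L * Lᵀ)
    (i : Fin m) (j : ℕ) (hj : j ≤ (i : ℕ)) :
    Λ i i -
      (fun a : Fin j => Λ i (Fin.castLE (hj.trans i.isLt.le) a)) ⬝ᵥ
        ((Λ.submatrix (Fin.castLE (hj.trans i.isLt.le)) (Fin.castLE (hj.trans i.isLt.le)))⁻¹ *ᵥ
          (fun a : Fin j => Λ (Fin.castLE (hj.trans i.isLt.le) a) i))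
      = ∑ k ∈ Finset.univ.filter (fun k : Fin m => j ≤ (k : ℕ) ∧ (k : ℕ) ≤ (i : ℕ)),
          (L i k) ^ 2 := by
  have hL : L.IsLowerTriangular := fun p q hpq => hLtri p q hpq
  have hjm : j ≤ m := hj.trans i.isLt.le
  subst hfac
  rw [hL.submatrix_castLE_mul_transpose hjm, hL.mul_transpose_apply_castLE hjm,
    hL.mul_transpose_castLE_apply hjm, mulVec_dotProduct_inv_mul_transpose_mulVec _
      (hL.isUnit_det_submatrix_castLE (fun k => (hLdiag k).ne') hjm),
    ← hL.mul_transpose_apply_self_sub_sum_sq hjm]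
  simp only [dotProduct, sq]

/-- Variance of best linear prediction error equals sum of squared Cholesky
entries: `λ_{i|j} = ∑_{k=j+1}^{i} L_{ik}²` (0-based: sum over `j ≤ k ≤ i`). -/
theorem stmt_0 (m : ℕ) (Λ L : Matrix (Fin m) (Fin m) ℝ)
    (hΛ : Λ.PosDef)
    (hLtri : ∀ i j : Fin m, i < j → L i j = 0)
    (hLdiag : ∀ i : Fin m, 0 < L i i)
    (hfac : Λ = L * Lᵀ)
    (i : Fin m) (j : ℕ) (hj : j ≤ (i : ℕ)) :
    Λ i i -
      (fun a : Fin j => Λ i (Fin.castLE (hj.trans i.isLt.le) a)) ⬝ᵥ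
        ((Λ.submatrix (Fin.castLE (hj.trans i.isLt.le)) (Fin.castLE (hj.trans i.isLt.le)))⁻¹ *ᵥ
          (fun a : Fin j => Λ (Fin.castLE (hj.trans i.isLt.le) a) i))
      = ∑ k ∈ Finset.univ.filter (fun k : Fin m => j ≤ (k : ℕ) ∧ (k : ℕ) ≤ (i : ℕ)),
          (L i k) ^ 2 :=
  stmt_0_general m Λ L hLtri hLdiag hfac i j hj
end

section
/- With Λ positive definite and lower triangular Cholesky factor L as above, L_{ij} = 0 (for j < i) if and only if the best linear estimate of e_i from (e_1,...,e_j) does not depend on e_j; equivalently, the j-th entry of (Λ_{1:j,1:j})^{-1} Λ_{1:j,i} is zero. -/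
open Matrix

private lemma sum_restrict_aux {m : ℕ} (j : Fin m) (F : Fin m → ℝ)
    (hF : ∀ c : Fin m, j < c → F c = 0) :
    ∑ c : Fin m, F c = ∑ c : Fin ((j : ℕ) + 1), F (Fin.castLE j.isLt c) := by
  classical
  have h1 : ∑ c : Fin ((j : ℕ) + 1), F (Fin.castLE j.isLt c)
      = ∑ c ∈ Finset.univ.map ⟨Fin.castLE j.isLt, Fin.castLE_injective _⟩, F c := by
    rw [Finset.sum_map]; rfl
  rw [h1]
  refine (Finset.sum_subset (Finset.subset_univ _) ?_).symm
  intro c _ hc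
  refine hF c ?_
  by_contra h
  push_neg at h
  exact hc (Finset.mem_map.2 ⟨⟨(c : ℕ), Nat.lt_succ_of_le h⟩, Finset.mem_univ _, rfl⟩)

/-- `L i j = 0` iff the best linear predictor of coordinate `i` from the first
coordinates (up to and including `j`) does not depend on coordinate `j`,
i.e. the last entry of the coefficient vector `(Λ_{1:j,1:j})⁻¹ Λ_{1:j,i}` is zero. -/
theorem stmt_1 (m : ℕ) (Λ L : Matrix (Fin m) (Fin m) ℝ)
    (hΛ : Λ.PosDef)
    (hLtri : ∀ i j : Fin m, i < j → L i j = 0)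
    (hLdiag : ∀ i : Fin m, 0 < L i i)
    (hfac : Λ = L * Lᵀ)
    (i j : Fin m) (hij : j < i) :
    L i j = 0 ↔
      ((Λ.submatrix (Fin.castLE j.isLt) (Fin.castLE j.isLt))⁻¹ *ᵥ
        (fun a : Fin ((j : ℕ) + 1) => Λ (Fin.castLE j.isLt a) i)) (Fin.last (j : ℕ)) = 0 := by
  classical
  set e : Fin ((j : ℕ) + 1) → Fin m := Fin.castLE j.isLt with he
  have he_le : ∀ a : Fin ((j : ℕ) + 1), (e a : ℕ) ≤ (j : ℕ) := fun a =>
    Nat.lt_succ_iff.mp a.isLt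
  have hej : e (Fin.last (j : ℕ)) = j := by
    exact Fin.ext rfl
  set L₁ : Matrix (Fin ((j : ℕ) + 1)) (Fin ((j : ℕ) + 1)) ℝ := L.submatrix e e with hL₁
  set w : Fin ((j : ℕ) + 1) → ℝ := fun c => L i (e c) with hw
  -- L₁ is lower triangular with positive diagonal, hence invertible
  have hL₁tri : ∀ a b : Fin ((j : ℕ) + 1), a < b → L₁ a b = 0 := by
    intro a b hab
    exact hLtri _ _ (by simp only [he, Fin.lt_def, Fin.coe_castLE]; exact hab)
  have hdet : L₁.det = ∏ a, L₁ a a := by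
    apply Matrix.det_of_lowerTriangular
    intro a b hab
    exact hL₁tri a b hab
  have hdet_pos : 0 < L₁.det := by
    rw [hdet]
    exact Finset.prod_pos fun a _ => hLdiag _
  have hdet_ne : L₁.det ≠ 0 := ne_of_gt hdet_pos
  have hdetT_ne : (L₁ᵀ).det ≠ 0 := by rwa [Matrix.det_transpose]
  -- the submatrix of Λ factors
  have hP : Λ.submatrix e e = L₁ * L₁ᵀ := by
    ext a b
    simp only [hfac, Matrix.submatrix_apply, Matrix.mul_apply, Matrix.transpose_apply, hL₁]
    exact sum_restrict_aux j (fun c => L (e a) c * L (e b) c) (fun c hc => by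
      rw [hLtri (e a) c (lt_of_le_of_lt (Fin.le_def.2 (he_le a)) hc), zero_mul])
  -- the target vector factors
  have hv : (fun a : Fin ((j : ℕ) + 1) => Λ (e a) i) = L₁ *ᵥ w := by
    ext a
    simp only [hfac, Matrix.mul_apply, Matrix.transpose_apply, Matrix.mulVec, dotProduct,
      hL₁, hw, Matrix.submatrix_apply]
    exact sum_restrict_aux j (fun c => L (e a) c * L i c) (fun c hc => by
      rw [hLtri (e a) c (lt_of_le_of_lt (Fin.le_def.2 (he_le a)) hc), zero_mul])
  set β : Fin ((j : ℕ) + 1) → ℝ :=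
    (Λ.submatrix e e)⁻¹ *ᵥ (fun a : Fin ((j : ℕ) + 1) => Λ (e a) i) with hβ
  have hβ' : β = (L₁ᵀ)⁻¹ *ᵥ w := by
    rw [hβ, hP, hv, Matrix.mul_inv_rev, ← Matrix.mulVec_mulVec,
      Matrix.mulVec_mulVec w L₁⁻¹ L₁,
      Matrix.nonsing_inv_mul _ (isUnit_iff_ne_zero.mpr hdet_ne), Matrix.one_mulVec]
  have hwβ : w = L₁ᵀ *ᵥ β := by
    rw [hβ', Matrix.mulVec_mulVec,
      Matrix.mul_nonsing_inv _ (isUnit_iff_ne_zero.mpr hdetT_ne), Matrix.one_mulVec]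
  -- compute the last entry
  have hkey : L i j = L j j * β (Fin.last (j : ℕ)) := by
    have h1 : w (Fin.last (j : ℕ)) = L i j := by rw [hw]; simp [hej]
    have h2 : (L₁ᵀ *ᵥ β) (Fin.last (j : ℕ)) = L j j * β (Fin.last (j : ℕ)) := by
      simp only [Matrix.mulVec, dotProduct, Matrix.transpose_apply]
      rw [Finset.sum_eq_single (Fin.last (j : ℕ))]
      · rw [hL₁, Matrix.submatrix_apply, hej]
      · intro b _ hb
        have hb' : b < Fin.last (j : ℕ) := lt_of_le_of_ne (Fin.le_last b) hb
        rw [hL₁tri b (Fin.last (j : ℕ)) hb', zero_mul]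
      · intro h; exact absurd (Finset.mem_univ _) h
    rw [← h1, hwβ, h2]
  constructor
  · intro h
    have := hkey.symm.trans h
    exact (mul_eq_zero.mp this).resolve_left (ne_of_gt (hLdiag j))
  · intro h
    rw [hkey, h, mul_zero]
end
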